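/- Let g be a hyper-Kähler metric on a hypercomplex manifold (M,I,J,K) and let ν be a Kähler potential for the complex structure I, that is F_I = dd_Iν. Then F_J = ½(dd_J + d_K d_I)ν and F_K = ½(dd_K + d_I d_J)ν; in particular ν is an HKT potential for g. -/

import Mathlib

/-!
For a hyperhermitian metric, `F_J(u, v) = -F_I(Ku, v)` and `F_K(u, v) = -F_J(Iu, v)` pointwise.
On a hypercomplex manifold the forms `½(dd_I + d_J d_K)μ`, `½(dd_J + d_K d_I)μ` and
`½(dd_K + d_I d_J)μ` obey the same two relations for every function `μ`: in flat coordinates the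
Hessian terms cancel by its symmetry, and the terms with derivatives of `I, J, K` by
integrability. Since `d_J d_K ν = -J(dd_I ν)` and `F_I = dd_I ν` is `J`-anti-invariant,
`½(dd_I + d_J d_K)ν = F_I`, and the two relations carry this over to `F_J` and `F_K`.
-/

noncomputable section

open Function

namespace HKTPaper

variable {E : Type*} [NormedAddCommGroup E] [NormedSpace ℝ E] [FiniteDimensional ℝ E]

/-- Exterior derivative of a function, in flat coordinates. -/
def d0 (f : E → ℝ) : E → E → ℝ := fun x u => fderiv ℝ f x u

/-- Exterior derivative of a 1-form (evaluated on constant vector fields), flat coordinates. -/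
def d1 (θ : E → E → ℝ) : E → E → E → ℝ := fun x u v =>
  fderiv ℝ (fun y => θ y v) x u - fderiv ℝ (fun y => θ y u) x v

/-- Exterior derivative of a 2-form, flat coordinates. -/
def d2 (F : E → E → E → ℝ) : E → E → E → E → ℝ := fun x u v w =>
  fderiv ℝ (fun y => F y v w) x u - fderiv ℝ (fun y => F y u w) x v
    + fderiv ℝ (fun y => F y u v) x w

variable {P : Type*}

/-- Action of an almost complex structure on 1-forms: `(𝓘θ)(X) = -θ(𝓘X)`. -/
def act1 (I : P → E →L[ℝ] E) (θ : P → E → ℝ) : P → E → ℝ := fun x u => -θ x (I x u)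

/-- Action of an almost complex structure on 2-forms: `(𝓘ω)(X,Y) = ω(𝓘X,𝓘Y)`. -/
def act2 (I : P → E →L[ℝ] E) (F : P → E → E → ℝ) : P → E → E → ℝ := fun x u v =>
  F x (I x u) (I x v)

/-- Action of an almost complex structure on 3-forms: `(𝓘ω)(X,Y,Z) = -ω(𝓘X,𝓘Y,𝓘Z)`. -/
def act3 (I : P → E →L[ℝ] E) (G : P → E → E → E → ℝ) : P → E → E → E → ℝ := fun x u v w =>
  -G x (I x u) (I x v) (I x w)

/-- `d_𝓘` on functions: `d_𝓘 f = 𝓘 d (𝓘 f)`. -/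
def dc0 (I : E → E →L[ℝ] E) (f : E → ℝ) : E → E → ℝ := act1 I (d0 f)

/-- `d_𝓘` on 1-forms: `d_𝓘 θ = (-1)¹ 𝓘 d (𝓘 θ)`. -/
def dc1 (I : E → E →L[ℝ] E) (θ : E → E → ℝ) : E → E → E → ℝ := fun x u v =>
  -(act2 I (d1 (act1 I θ)) x u v)

/-- Lie bracket of vector fields, flat coordinates. -/
def lieBracket (X Y : E → E) : E → E := fun x => fderiv ℝ Y x (X x) - fderiv ℝ X x (Y x)

/-- Nijenhuis tensor `N(X,Y) = [𝓘X,𝓘Y] - 𝓘[𝓘X,Y] - 𝓘[X,𝓘Y] - [X,Y]` evaluated on the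
constant vector fields with values `u`, `v`. -/
def nijTensor (I : E → E →L[ℝ] E) (u v : E) : E → E := fun x =>
  lieBracket (fun y => I y u) (fun y => I y v) x
    - I x (lieBracket (fun y => I y u) (fun _ => v) x)
    - I x (lieBracket (fun _ => u) (fun y => I y v) x)
    - lieBracket (fun _ => u) (fun _ => v) x

/-- An almost complex structure on an open set `U`. -/
structure IsAcsOn (U : Set E) (I : E → E →L[ℝ] E) : Prop where
  smooth : ContDiffOn ℝ (⊤ : ℕ∞) I U
  square : ∀ x ∈ U, ∀ v, I x (I x v) = -v

/-- Integrability (vanishing of the Nijenhuis tensor). -/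
def IntegrableOn (U : Set E) (I : E → E →L[ℝ] E) : Prop :=
  ∀ u v : E, ∀ x ∈ U, nijTensor I u v x = 0

/-- A hypercomplex structure on an open set `U`: three integrable almost complex structures
with `IJ = -JI = K`. -/
structure IsHypercomplexOn (U : Set E) (I J K : E → E →L[ℝ] E) : Prop where
  acsI : IsAcsOn U I
  acsJ : IsAcsOn U J
  acsK : IsAcsOn U K
  mulIJ : ∀ x ∈ U, ∀ v, I x (J x v) = K x v
  mulJI : ∀ x ∈ U, ∀ v, J x (I x v) = -(K x v)
  intI : IntegrableOn U I
  intJ : IntegrableOn U J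
  intK : IntegrableOn U K

/-- A hyperhermitian (possibly indefinite) metric on `U`. -/
structure IsHyperHermitianOn (U : Set E) (I J K : E → E →L[ℝ] E)
    (g : E → E →ₗ[ℝ] E →ₗ[ℝ] ℝ) : Prop where
  smooth : ∀ u v : E, ContDiffOn ℝ (⊤ : ℕ∞) (fun x => g x u v) U
  symm : ∀ x ∈ U, ∀ u v, g x u v = g x v u
  nondeg : ∀ x ∈ U, ∀ u, (∀ v, g x u v = 0) → u = 0
  hermI : ∀ x ∈ U, ∀ u v, g x (I x u) (I x v) = g x u v
  hermJ : ∀ x ∈ U, ∀ u v, g x (J x u) (J x v) = g x u v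
  hermK : ∀ x ∈ U, ∀ u v, g x (K x u) (K x v) = g x u v

/-- The Kähler form `F_𝓘 = g(𝓘·,·)`. -/
def kaehlerForm (I : E → E →L[ℝ] E) (g : E → E →ₗ[ℝ] E →ₗ[ℝ] ℝ) : E → E → E → ℝ :=
  fun x u v => g x (I x u) v

/-- The HKT condition `I dF_I = J dF_J = K dF_K` on `U`. -/
def IsHKTOn (U : Set E) (I J K : E → E →L[ℝ] E) (g : E → E →ₗ[ℝ] E →ₗ[ℝ] ℝ) : Prop :=
  (∀ x ∈ U, ∀ u v w, act3 I (d2 (kaehlerForm I g)) x u v w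
      = act3 J (d2 (kaehlerForm J g)) x u v w) ∧
  (∀ x ∈ U, ∀ u v w, act3 J (d2 (kaehlerForm J g)) x u v w
      = act3 K (d2 (kaehlerForm K g)) x u v w)

/-- `μ` is an HKT potential for `g` on `U`:
`F_I = ½(dd_I + d_J d_K)μ`, `F_J = ½(dd_J + d_K d_I)μ`, `F_K = ½(dd_K + d_I d_J)μ`. -/
def IsHKTPotentialOn (U : Set E) (I J K : E → E →L[ℝ] E)
    (g : E → E →ₗ[ℝ] E →ₗ[ℝ] ℝ) (μ : E → ℝ) : Prop :=
  ∀ x ∈ U, ∀ u v,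
    kaehlerForm I g x u v = (1 / 2) * (d1 (dc0 I μ) x u v + dc1 J (dc0 K μ) x u v) ∧
    kaehlerForm J g x u v = (1 / 2) * (d1 (dc0 J μ) x u v + dc1 K (dc0 I μ) x u v) ∧
    kaehlerForm K g x u v = (1 / 2) * (d1 (dc0 K μ) x u v + dc1 I (dc0 J μ) x u v)

end HKTPaper

namespace HKTPaper

variable {E : Type*} [NormedAddCommGroup E] [NormedSpace ℝ E] [FiniteDimensional ℝ E]

/-- A hyper-Kähler metric: a hyperhermitian metric which is Kähler for each of the three
complex structures, i.e. `dF_I = dF_J = dF_K = 0`. -/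
structure IsHyperKaehlerOn (U : Set E) (I J K : E → E →L[ℝ] E)
    (g : E → E →ₗ[ℝ] E →ₗ[ℝ] ℝ) : Prop where
  hyperHermitian : IsHyperHermitianOn U I J K g
  closedI : ∀ x ∈ U, ∀ u v w, d2 (kaehlerForm I g) x u v w = 0
  closedJ : ∀ x ∈ U, ∀ u v w, d2 (kaehlerForm J g) x u v w = 0
  closedK : ∀ x ∈ U, ∀ u v w, d2 (kaehlerForm K g) x u v w = 0

end HKTPaper

namespace HKTPaper

open Filter Topology

variable {E : Type*} [NormedAddCommGroup E] [NormedSpace ℝ E]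

section

variable {U : Set E} {x : E} {Q R S : E → E →L[ℝ] E}

lemma fderiv_clm_apply_const_apply (hQ : DifferentiableAt ℝ Q x) (z w : E) :
    fderiv ℝ (fun y => Q y z) x w = fderiv ℝ Q x w z := by
  simp [fderiv_clm_apply hQ (differentiableAt_const z)]

lemma fderiv_apply_eq_of_comp_eq (hU : U ∈ 𝓝 x) (hQ : DifferentiableAt ℝ Q x)
    (hR : DifferentiableAt ℝ R x) (h : ∀ y ∈ U, ∀ z, Q y (R y z) = S y z) (w z : E) :
    fderiv ℝ S x w z = Q x (fderiv ℝ R x w z) + fderiv ℝ Q x w (R x z) := by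
  have hS : (fun y => (Q y).comp (R y)) =ᶠ[𝓝 x] S := by
    filter_upwards [hU] with y hy
    ext z
    exact h y hy z
  rw [← hS.fderiv_eq, fderiv_clm_comp hQ hR]
  simp

lemma fderiv_apply_eq_neg_of_sq_eq_neg (hU : U ∈ 𝓝 x) (hQ : DifferentiableAt ℝ Q x)
    (h : ∀ y ∈ U, ∀ z, Q y (Q y z) = -z) (w z : E) :
    Q x (fderiv ℝ Q x w z) = -fderiv ℝ Q x w (Q x z) := by
  have h' : ∀ y ∈ U, ∀ z, Q y (Q y z) = (fun _ : E => -ContinuousLinearMap.id ℝ E) y z := by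
    simpa using h
  have := fderiv_apply_eq_of_comp_eq hU hQ hQ h' w z
  simp only [fderiv_fun_const, Pi.zero_apply, zero_apply] at this
  linear_combination (norm := module) -this

/-- `dQ(a, b) = (D_a Q) b - (D_b Q) a`, the exterior derivative of `Q` viewed as an `E`-valued
1-form. -/
def dEnd (Q : E → E →L[ℝ] E) (x : E) : E →L[ℝ] E →L[ℝ] E :=
  fderiv ℝ Q x - (fderiv ℝ Q x).flip

lemma dEnd_apply (Q : E → E →L[ℝ] E) (x a b : E) :
    dEnd Q x a b = fderiv ℝ Q x a b - fderiv ℝ Q x b a :=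
  rfl

lemma dEnd_of_comp_eq (hU : U ∈ 𝓝 x) (hQ : DifferentiableAt ℝ Q x)
    (hR : DifferentiableAt ℝ R x) (h : ∀ y ∈ U, ∀ z, Q y (R y z) = S y z) (a b : E) :
    dEnd S x a b = Q x (dEnd R x a b) + fderiv ℝ Q x a (R x b) - fderiv ℝ Q x b (R x a) := by
  simp only [dEnd_apply, fderiv_apply_eq_of_comp_eq hU hQ hR h, map_sub]
  abel

lemma d1_dc0_apply {μ : E → ℝ} (hQ : DifferentiableAt ℝ Q x)
    (hμ : DifferentiableAt ℝ (fderiv ℝ μ) x) (u v : E) :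
    d1 (dc0 Q μ) x u v = fderiv ℝ (fderiv ℝ μ) x v (Q x u)
      - fderiv ℝ (fderiv ℝ μ) x u (Q x v) - fderiv ℝ μ x (dEnd Q x u v) := by
  have hderiv : ∀ z, HasFDerivAt (fun y => dc0 Q μ y z)
      (-((fderiv ℝ μ x).comp ((fderiv ℝ Q x).flip z) + (fderiv ℝ (fderiv ℝ μ) x).flip (Q x z)))
      x := fun z =>
    (hμ.hasFDerivAt.clm_apply (hQ.hasFDerivAt.clm_apply (hasFDerivAt_const z x))).neg.congr_fderiv
      (by simp)
  simp only [d1, (hderiv _).fderiv, dEnd_apply, neg_apply, add_apply,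
    ContinuousLinearMap.comp_apply, ContinuousLinearMap.flip_apply, map_sub]
  ring

lemma dc1_dc0_eq_neg_d1 {μ : E → ℝ} (hU : U ∈ 𝓝 x) (h : ∀ y ∈ U, ∀ z, R y (Q y z) = -S y z)
    (u v : E) : dc1 Q (dc0 R μ) x u v = -d1 (dc0 S μ) x (Q x u) (Q x v) := by
  have hconj : ∀ z, (fun y => act1 Q (dc0 R μ) y z) =ᶠ[𝓝 x] fun y => dc0 S μ y z := by
    intro z
    filter_upwards [hU] with y hy
    simp [act1, dc0, d0, h y hy]
  simp only [dc1, act2, d1, (hconj _).fderiv_eq]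

lemma IsAcsOn.differentiableAt (hQ : IsAcsOn U Q) (hU : U ∈ 𝓝 x) : DifferentiableAt ℝ Q x :=
  (hQ.smooth.contDiffAt hU).differentiableAt (by simp)

/-- On constant vector fields the Nijenhuis tensor of `Q` is `dQ(Qa, b) + dQ(a, Qb)`. -/
lemma IsAcsOn.dEnd_apply_left_add_dEnd_apply_right (hQ : IsAcsOn U Q)
    (hint : IntegrableOn U Q) (hU : U ∈ 𝓝 x) (a b : E) :
    dEnd Q x (Q x a) b + dEnd Q x a (Q x b) = 0 := by
  have hQx := hQ.differentiableAt hU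
  have hN := hint a b x (mem_of_mem_nhds hU)
  simp only [nijTensor, lieBracket, fderiv_clm_apply_const_apply hQx, fderiv_fun_const,
    Pi.zero_apply, zero_apply, map_sub,
    fderiv_apply_eq_neg_of_sq_eq_neg hU hQx hQ.square] at hN
  rw [← hN, dEnd_apply, dEnd_apply]
  abel

/-- `½(dd_I + d_J d_K)μ`: `IsHKTPotentialOn` asks `F_I`, `F_J`, `F_K` to be this form for the
three cyclic orders of `(I, J, K)`. -/
def hktForm (I J K : E → E →L[ℝ] E) (μ : E → ℝ) : E → E → E → ℝ := fun x u v =>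
  (1 / 2) * (d1 (dc0 I μ) x u v + dc1 J (dc0 K μ) x u v)

namespace IsHypercomplexOn

variable {I J K : E → E →L[ℝ] E} (h : IsHypercomplexOn U I J K)
include h

lemma mulKJ : ∀ y ∈ U, ∀ w, K y (J y w) = -I y w := by
  intro y hy w
  rw [← h.mulIJ y hy, h.acsJ.square y hy, map_neg]

lemma mulJK : ∀ y ∈ U, ∀ w, J y (K y w) = I y w := by
  intro y hy w
  rw [← h.mulIJ y hy, h.mulJI y hy, h.mulKJ y hy, neg_neg]

lemma mulIK : ∀ y ∈ U, ∀ w, I y (K y w) = -J y w := by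
  intro y hy w
  rw [← h.mulIJ y hy, h.acsI.square y hy]

lemma sqK : ∀ y ∈ U, ∀ w, K y (K y w) = -w := by
  intro y hy w
  rw [← h.mulIJ y hy, h.mulJK y hy, h.acsI.square y hy]

lemma rotate : IsHypercomplexOn U J K I where
  acsI := h.acsJ
  acsJ := h.acsK
  acsK := h.acsI
  mulIJ := h.mulJK
  mulJI := h.mulKJ
  intI := h.intJ
  intJ := h.intK
  intK := h.intI

lemma hktForm_eq (hU : U ∈ 𝓝 x) (μ : E → ℝ) (u v : E) :
    hktForm I J K μ x u v = (1 / 2) * (d1 (dc0 I μ) x u v - d1 (dc0 I μ) x (J x u) (J x v)) := by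
  rw [hktForm, dc1_dc0_eq_neg_d1 hU h.mulKJ]
  ring

/-- Differentiating `IJ = K` expresses `dJ` through `dK` and `DI`; integrability of `K` then
removes the `dK` terms and integrability of `I` the rest. -/
lemma dEnd_sub_dEnd_conj_eq (hU : U ∈ 𝓝 x) (u v : E) :
    dEnd J x u v - dEnd J x (K x u) (K x v) = dEnd I x (I x u) (J x v) - dEnd I x (K x u) v := by
  have hx := mem_of_mem_nhds hU
  have hI := h.acsI.differentiableAt hU
  have hJ := h.acsJ.differentiableAt hU
  have hJK : ∀ a b, dEnd J x a b
      = -I x (dEnd K x a b) - fderiv ℝ I x a (K x b) + fderiv ℝ I x b (K x a) := by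
    intro a b
    simp only [dEnd_of_comp_eq hU hI hJ h.mulIJ, map_add, map_sub, h.acsI.square x hx,
      fderiv_apply_eq_neg_of_sq_eq_neg hU hI h.acsI.square, h.mulIJ x hx]
    abel
  have hKint := h.acsK.dEnd_apply_left_add_dEnd_apply_right h.intK hU (K x u) v
  have hIint := h.acsI.dEnd_apply_left_add_dEnd_apply_right h.intI hU u (J x v)
  simp only [h.sqK x hx, h.mulIJ x hx, map_neg, neg_apply, dEnd_apply I x u] at hKint hIint
  rw [hJK, hJK, ← neg_add_eq_zero.mp hKint, dEnd_apply I x (K x u), h.sqK x hx,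
    h.sqK x hx, map_neg, map_neg]
  linear_combination (norm := module) -hIint

lemma hktForm_rotate_eq (hU : U ∈ 𝓝 x) {μ : E → ℝ} (hμ : ContDiffAt ℝ 2 μ x) (u v : E) :
    hktForm J K I μ x u v = -hktForm I J K μ x (K x u) v := by
  have hx := mem_of_mem_nhds hU
  have hI := h.acsI.differentiableAt hU
  have hJ := h.acsJ.differentiableAt hU
  have hμ' : DifferentiableAt ℝ (fderiv ℝ μ) x :=
    (hμ.fderiv_right (m := 1) le_rfl).differentiableAt one_ne_zero
  have hsymm := hμ.isSymmSndFDerivAt (by simp)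
  have hdEnd := congrArg (fderiv ℝ μ x) (h.dEnd_sub_dEnd_conj_eq hU u v)
  simp only [map_sub] at hdEnd
  rw [h.rotate.hktForm_eq hU, h.hktForm_eq hU, d1_dc0_apply hJ hμ', d1_dc0_apply hJ hμ',
    d1_dc0_apply hI hμ', d1_dc0_apply hI hμ', h.mulJK x hx, h.mulJK x hx, h.mulIK x hx,
    h.mulIJ x hx, h.acsI.square x hx, map_neg, map_neg]
  linear_combination (-1 / 2 : ℝ) * (hdEnd + hsymm u (J x v) + hsymm (K x v) (I x u))

end IsHypercomplexOn

end

variable [FiniteDimensional ℝ E]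

/-- Let `g` be a hyper-Kähler metric on a hypercomplex manifold
`(M,I,J,K)` and let `ν` be a Kähler potential for the complex structure `I`, i.e.
`F_I = dd_I ν`.  Then `F_J = ½(dd_J + d_K d_I)ν` and `F_K = ½(dd_K + d_I d_J)ν`; in
particular `ν` is an HKT potential for `g`. -/
theorem kaehler_potential_of_hyperkaehler_is_hkt_potential
    (U : Set E) (hU : IsOpen U) (I J K : E → E →L[ℝ] E) (g : E → E →ₗ[ℝ] E →ₗ[ℝ] ℝ)
    (hhc : IsHypercomplexOn U I J K) (hhk : IsHyperKaehlerOn U I J K g)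
    (ν : E → ℝ) (hν : ContDiffOn ℝ (⊤ : ℕ∞) ν U)
    (hpot : ∀ x ∈ U, ∀ u v, kaehlerForm I g x u v = d1 (dc0 I ν) x u v) :
    (∀ x ∈ U, ∀ u v, kaehlerForm J g x u v
        = (1 / 2) * (d1 (dc0 J ν) x u v + dc1 K (dc0 I ν) x u v)) ∧
    (∀ x ∈ U, ∀ u v, kaehlerForm K g x u v
        = (1 / 2) * (d1 (dc0 K ν) x u v + dc1 I (dc0 J ν) x u v)) ∧
    IsHKTPotentialOn U I J K g ν := by
  have hpotential : IsHKTPotentialOn U I J K g ν := by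
    intro x hx u v
    have hUx := hU.mem_nhds hx
    have hνx : ContDiffAt ℝ 2 ν x := (hν.contDiffAt hUx).of_le (WithTop.coe_le_coe.mpr le_top)
    have hFI : ∀ u v, kaehlerForm I g x u v = hktForm I J K ν x u v := by
      intro u v
      have hJinv := hhk.hyperHermitian.hermJ x hx (I x u) v
      rw [hhc.hktForm_eq hUx, ← hpot x hx, ← hpot x hx]
      simp only [kaehlerForm, hhc.mulJI x hx, hhc.mulIJ x hx, map_neg, LinearMap.neg_apply]
        at hJinv ⊢
      linarith
    have hFJ : ∀ u v, kaehlerForm J g x u v = hktForm J K I ν x u v := by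
      intro u v
      rw [hhc.hktForm_rotate_eq hUx hνx, ← hFI]
      simp [kaehlerForm, hhc.mulIK x hx]
    have hFK : kaehlerForm K g x u v = hktForm K I J ν x u v := by
      rw [hhc.rotate.hktForm_rotate_eq hUx hνx, ← hFJ]
      simp [kaehlerForm, hhc.mulJI x hx]
    exact ⟨hFI u v, hFJ u v, hFK⟩
  exact ⟨fun x hx u v => (hpotential x hx u v).2.1, fun x hx u v => (hpotential x hx u v).2.2,
    hpotential⟩

end HKTPaper
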